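/- Let z : [0, ∞) → 𝓗 be a function into a normed space such that sup_{t≥0} |z(t)| ≤ c|z(0)| and ‖z‖_{L²((0,∞);𝓗)} ≤ c|z(0)| for a constant c ≥ 1, where these bounds hold along the flow in the sense that for every s ≥ 0 the shifted trajectory t ↦ z(t+s) satisfies the same bounds with initial value z(s). Then for every R > 0 and ρ > 0, setting T = c⁴R²/ρ², one has |z(t)| ≤ ρ for all t ≥ T whenever |z(0)| ≤ R. -/

import Mathlib

/-!
Averaging the `L²` bound over `(0, t)` produces a time `t₀ < t` with `t ‖z(t₀)‖² ≤ c² ‖z(0)‖²`;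
restarting the sup bound at `t₀` gives the decay estimate `t ‖z(t)‖² ≤ c⁴ ‖z(0)‖²`, and
`T = c⁴ R² / ρ²` is exactly the time after which this forces `‖z(t)‖ ≤ ρ`.
-/

open MeasureTheory Set

theorem exists_mem_Ioo_mul_le_setIntegral {f : ℝ → ℝ} {a b : ℝ} (hab : a < b)
    (hf : IntegrableOn f (Ioo a b)) : ∃ t ∈ Ioo a b, (b - a) * f t ≤ ∫ s in Ioo a b, f s := by
  obtain ⟨t, ht, hle⟩ := exists_le_setAverage (by simpa using hab) (by simp) hf
  refine ⟨t, ht, ?_⟩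
  rw [setAverage_eq, Real.volume_real_Ioo_of_le hab.le, smul_eq_mul] at hle
  rwa [← le_inv_mul_iff₀ (sub_pos.2 hab)]

theorem mul_sq_norm_le_of_sup_bound_of_integral_bound {E : Type*} [SeminormedAddCommGroup E]
    {z : ℝ → E} {c : ℝ} (hsup : ∀ s, 0 ≤ s → ∀ t, 0 ≤ t → ‖z (t + s)‖ ≤ c * ‖z s‖)
    (hint : IntegrableOn (fun t => ‖z t‖ ^ 2) (Ioi 0))
    (hL2 : ∫ t in Ioi 0, ‖z t‖ ^ 2 ≤ c ^ 2 * ‖z 0‖ ^ 2) {t : ℝ} (ht : 0 ≤ t) :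
    t * ‖z t‖ ^ 2 ≤ c ^ 4 * ‖z 0‖ ^ 2 := by
  rcases ht.eq_or_lt with rfl | ht
  · simp only [zero_mul]
    positivity
  obtain ⟨t₀, ht₀, hmean⟩ :=
    exists_mem_Ioo_mul_le_setIntegral ht (hint.mono_set Ioo_subset_Ioi_self)
  have hrestart : ‖z t‖ ^ 2 ≤ c ^ 2 * ‖z t₀‖ ^ 2 := by
    have h := hsup t₀ ht₀.1.le (t - t₀) (sub_nonneg.2 ht₀.2.le)
    rw [sub_add_cancel] at h
    rw [← mul_pow]
    exact pow_le_pow_left₀ (norm_nonneg _) h 2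
  have hsub : ∫ s in Ioo 0 t, ‖z s‖ ^ 2 ≤ ∫ s in Ioi 0, ‖z s‖ ^ 2 :=
    setIntegral_mono_set hint (ae_of_all _ fun _ => sq_nonneg _)
      Ioo_subset_Ioi_self.eventuallyLE
  calc t * ‖z t‖ ^ 2 ≤ c ^ 2 * (t * ‖z t₀‖ ^ 2) :=
        (mul_le_mul_of_nonneg_left hrestart ht.le).trans_eq (by ring)
    _ ≤ c ^ 2 * (c ^ 2 * ‖z 0‖ ^ 2) := by
        rw [sub_zero] at hmean
        exact mul_le_mul_of_nonneg_left (hmean.trans (hsub.trans hL2)) (sq_nonneg c)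
    _ = c ^ 4 * ‖z 0‖ ^ 2 := by ring

theorem stmt_4_general {𝓗 : Type*} [NormedAddCommGroup 𝓗]
    (z : ℝ → 𝓗) (c : ℝ) (hc : 1 ≤ c)
    (hsup : ∀ s, 0 ≤ s → ∀ t, 0 ≤ t → ‖z (t + s)‖ ≤ c * ‖z s‖)
    (hint : ∀ s, 0 ≤ s → IntegrableOn (fun t => ‖z (t + s)‖ ^ 2) (Ioi (0 : ℝ)))
    (hL2 : ∀ s, 0 ≤ s → ∫ t in Ioi (0 : ℝ), ‖z (t + s)‖ ^ 2 ≤ c ^ 2 * ‖z s‖ ^ 2)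
    (R ρ : ℝ) (hR : 0 < R) (hρ : 0 < ρ) (h0 : ‖z 0‖ ≤ R) :
    ∀ t, c ^ 4 * R ^ 2 / ρ ^ 2 ≤ t → ‖z t‖ ≤ ρ := by
  intro t ht
  have hc₀ : 0 < c := one_pos.trans_le hc
  have hT : 0 < c ^ 4 * R ^ 2 / ρ ^ 2 := by positivity
  have hdecay : t * ‖z t‖ ^ 2 ≤ c ^ 4 * ‖z 0‖ ^ 2 :=
    mul_sq_norm_le_of_sup_bound_of_integral_bound hsup (by simpa using hint 0 le_rfl)
      (by simpa using hL2 0 le_rfl) (hT.le.trans ht)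
  have hR₂ : c ^ 4 * ‖z 0‖ ^ 2 ≤ c ^ 4 * R ^ 2 := by gcongr
  suffices c ^ 4 * R ^ 2 / ρ ^ 2 * ‖z t‖ ^ 2 ≤ c ^ 4 * R ^ 2 / ρ ^ 2 * ρ ^ 2 by
    exact (pow_le_pow_iff_left₀ (norm_nonneg _) hρ.le two_ne_zero).1
      (le_of_mul_le_mul_left this hT)
  calc c ^ 4 * R ^ 2 / ρ ^ 2 * ‖z t‖ ^ 2 ≤ t * ‖z t‖ ^ 2 := by gcongr
    _ ≤ c ^ 4 * R ^ 2 := hdecay.trans hR₂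
    _ = c ^ 4 * R ^ 2 / ρ ^ 2 * ρ ^ 2 := by field_simp

/-- Abstract version of Lemma 3.2: if a continuous trajectory `z` satisfies, along the flow
(i.e. for every shift `s ≥ 0`), the sup bound `‖z(t+s)‖ ≤ c ‖z(s)‖` and the `L²` bound
`∫_{0}^{∞} ‖z(t+s)‖² dt ≤ c² ‖z(s)‖²` with a constant `c ≥ 1`, then for every `R, ρ > 0`,
setting `T = c⁴ R² / ρ²`, one has `‖z(t)‖ ≤ ρ` for all `t ≥ T` whenever `‖z(0)‖ ≤ R`. -/
theorem stmt_4 {𝓗 : Type*} [NormedAddCommGroup 𝓗]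
    (z : ℝ → 𝓗) (hz : Continuous z) (c : ℝ) (hc : 1 ≤ c)
    (hsup : ∀ s, 0 ≤ s → ∀ t, 0 ≤ t → ‖z (t + s)‖ ≤ c * ‖z s‖)
    (hint : ∀ s, 0 ≤ s → IntegrableOn (fun t => ‖z (t + s)‖ ^ 2) (Ioi (0 : ℝ)))
    (hL2 : ∀ s, 0 ≤ s → ∫ t in Ioi (0 : ℝ), ‖z (t + s)‖ ^ 2 ≤ c ^ 2 * ‖z s‖ ^ 2)
    (R ρ : ℝ) (hR : 0 < R) (hρ : 0 < ρ) (h0 : ‖z 0‖ ≤ R) :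
    ∀ t, c ^ 4 * R ^ 2 / ρ ^ 2 ≤ t → ‖z t‖ ≤ ρ :=
  stmt_4_general z c hc hsup hint hL2 R ρ hR hρ h0
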